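/- For a pooling method on trees with edge receptive field r = 1, the minimal sampling ratio k* ensuring at least one edge in the pooled graph for every tree structure on N vertices tends to 1 as N → ∞; for edge receptive field r = 3, k* tends to 1/2 as N → ∞. -/

import Mathlib

/-!
For `r = 1`: the leaves of a star on `N` vertices are `N - 1` pairwise non-adjacent vertices, while
a tree on `N ≥ 2` vertices has an edge, so no `N` vertices are pairwise `2`-far; hence
`1 - 1/N ≤ k* ≤ 1`. For `r = 3`: the feet of a spider with `⌊(N - 1)/2⌋` legs of length two are
pairwise at distance `4`, while in a tree on `N ≥ 2` vertices the closed neighbourhoods of vertices at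
pairwise distance `> 2` are disjoint and have at least two elements each, so at most `N/2` vertices
are pairwise `4`-far; hence `1/2 - 1/N ≤ k* ≤ 1/2 + 1/N`.
-/

open Filter

/-- The minimal sampling ratio `k*` for trees on `N` vertices with edge receptive
field `r`: the infimum of ratios `k` such that any selection of `⌈kN⌉` vertices in
any tree on `N` vertices contains two vertices at tree distance at most `r`. -/
noncomputable def treeKStar (N r : ℕ) : ℝ :=
  sInf {k : ℝ | 0 ≤ k ∧
    ∀ T : SimpleGraph (Fin N), T.IsTree →
      ∀ S : Finset (Fin N), S.card = ⌈k * (N : ℝ)⌉₊ →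
        ∃ i ∈ S, ∃ j ∈ S, i ≠ j ∧ T.dist i j ≤ r}

namespace SimpleGraph

variable {V : Type*} [LinearOrder V] {r : V} {p : V → V}

def parentGraph (r : V) (p : V → V) : SimpleGraph V :=
  fromRel fun v w => v ≠ r ∧ p v = w

lemma parentGraph_adj_parent (hp : ∀ v ≠ r, p v < v) {v : V} (hv : v ≠ r) :
    (parentGraph r p).Adj v (p v) :=
  (fromRel_adj _ _ _).2 ⟨(hp v hv).ne', Or.inl ⟨hv, rfl⟩⟩

lemma parentGraph_connected [WellFoundedLT V] (hp : ∀ v ≠ r, p v < v) :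
    (parentGraph r p).Connected := by
  have hroot : ∀ v, (parentGraph r p).Reachable r v := fun v =>
    WellFoundedLT.induction v fun v ih => by
      by_cases hv : v = r
      · exact hv ▸ Reachable.refl v
      · exact (ih _ (hp v hv)).trans (parentGraph_adj_parent hp hv).symm.reachable
  exact (connected_iff _).2 ⟨fun u v => (hroot u).symm.trans (hroot v), ⟨r⟩⟩

lemma edgeSet_parentGraph (hp : ∀ v ≠ r, p v < v) :
    (parentGraph r p).edgeSet = Set.range fun v : {v // v ≠ r} => s(v.1, p v.1) := by
  ext e
  induction e using Sym2.ind with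
  | _ v w =>
    simp only [mem_edgeSet, parentGraph, fromRel_adj, Set.mem_range, Subtype.exists, Sym2.eq_iff]
    constructor
    · rintro ⟨-, ⟨hv, rfl⟩ | ⟨hw, rfl⟩⟩
      · exact ⟨v, hv, Or.inl ⟨rfl, rfl⟩⟩
      · exact ⟨w, hw, Or.inr ⟨rfl, rfl⟩⟩
    · rintro ⟨u, hu, ⟨rfl, rfl⟩ | ⟨rfl, rfl⟩⟩
      · exact ⟨(hp u hu).ne', Or.inl ⟨hu, rfl⟩⟩
      · exact ⟨(hp u hu).ne, Or.inr ⟨hu, rfl⟩⟩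

lemma isTree_parentGraph [Finite V] (hp : ∀ v ≠ r, p v < v) : (parentGraph r p).IsTree := by
  refine isTree_iff_connected_and_card.2 ⟨parentGraph_connected hp, ?_⟩
  have hinj : Function.Injective fun v : {v // v ≠ r} => s(v.1, p v.1) := by
    rintro ⟨v, hv⟩ ⟨w, hw⟩ h
    rcases Sym2.eq_iff.1 h with ⟨h, -⟩ | ⟨hvw, hwv⟩
    · exact Subtype.ext h
    · have hwv' := hp v hv
      have hvw' := hp w hw
      rw [hwv] at hwv'
      rw [← hvw] at hvw'
      exact absurd (hwv'.trans hvw') (lt_irrefl _)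
  rw [edgeSet_parentGraph hp, Nat.card_range_of_injective hinj]
  have := Fintype.ofFinite V
  classical
  simp only [Nat.card_eq_fintype_card, Fintype.card_subtype_compl, Fintype.card_unique]
  exact Nat.sub_add_cancel (Fintype.card_pos_iff.2 ⟨r⟩)

variable {W : Type*} {G : SimpleGraph W}

lemma Walk.abs_sub_le_length (f : W → ℤ) (hf : ∀ a b, G.Adj a b → |f a - f b| ≤ 1) {u v : W}
    (q : G.Walk u v) : |f u - f v| ≤ q.length := by
  induction q with
  | nil => simp
  | @cons u w v hadj q ih =>
    calc |f u - f v| ≤ |f u - f w| + |f w - f v| := abs_sub_le _ _ _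
      _ ≤ 1 + q.length := add_le_add (hf _ _ hadj) ih
      _ = (q.cons hadj).length := by rw [Walk.length_cons]; push_cast; ring

lemma Reachable.abs_sub_le_dist (f : W → ℤ) (hf : ∀ a b, G.Adj a b → |f a - f b| ≤ 1)
    {u v : W} (h : G.Reachable u v) : |f u - f v| ≤ G.dist u v := by
  obtain ⟨q, hq⟩ := h.exists_walk_length_eq_dist
  exact hq ▸ q.abs_sub_le_length f hf

lemma two_mul_card_le_of_pairwise_two_lt_dist [Fintype W] (hG : ∀ v, ∃ w, G.Adj v w)
    {S : Finset W} (hS : (S : Set W).Pairwise fun u v => 2 < G.dist u v) :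
    2 * S.card ≤ Fintype.card W := by
  classical
  choose n hn using hG
  have hinj : Set.InjOn n S := fun u hu v hv huv => by
    by_contra hne
    exact (hS hu hv hne).not_ge (dist_le (.cons (hn u) (.cons (huv ▸ (hn v).symm) .nil)))
  have hdisj : Disjoint S (S.image n) := by
    refine Finset.disjoint_left.2 fun u hu hu' => ?_
    obtain ⟨v, hv, rfl⟩ := Finset.mem_image.1 hu'
    have hle : G.dist v (n v) ≤ 1 := dist_le (.cons (hn v) .nil)
    exact (hS hv hu (hn v).ne).not_ge (hle.trans (by norm_num))
  calc 2 * S.card = (S ∪ S.image n).card := by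
        rw [Finset.card_union_of_disjoint hdisj, Finset.card_image_of_injOn hinj]; ring
    _ ≤ Fintype.card W := Finset.card_le_univ _

end SimpleGraph

open SimpleGraph

section TreeKStar

variable {N r : ℕ}

lemma treeKStar_le {k : ℝ} (hk : 0 ≤ k)
    (hfar : ∀ T : SimpleGraph (Fin N), T.IsTree → ∀ S : Finset (Fin N),
      (S : Set (Fin N)).Pairwise (fun i j => r < T.dist i j) → (S.card : ℝ) < k * N) :
    treeKStar N r ≤ k := by
  refine csInf_le ⟨0, fun _ hk => hk.1⟩ ⟨hk, fun T hT S hS => ?_⟩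
  by_contra! hclose
  have hlt := hfar T hT S fun i hi j hj hij => hclose i hi j hj hij
  rw [hS] at hlt
  exact hlt.not_ge (Nat.le_ceil _)

lemma div_le_treeKStar {T : SimpleGraph (Fin N)} (hT : T.IsTree) {A : Finset (Fin N)}
    (hA : (A : Set (Fin N)).Pairwise fun i j => r < T.dist i j) :
    (A.card : ℝ) / N ≤ treeKStar N r := by
  have hN₀ : 0 < N := Fin.pos_iff_nonempty.2 hT.connected.nonempty
  have hN : (0 : ℝ) < N := Nat.cast_pos.2 hN₀
  -- `2` lies in the set vacuously: no `S` has `2N > N` elements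
  refine le_csInf ⟨2, zero_le_two, fun T _ S hS => absurd S.card_le_univ ?_⟩ fun k ⟨_, hk⟩ => ?_
  · rw [hS, Fintype.card_fin, ← Nat.cast_ofNat, ← Nat.cast_mul, Nat.ceil_natCast, not_le]
    omega
  by_contra! hlt
  have hceil : ⌈k * N⌉₊ ≤ A.card := Nat.ceil_le.2 ((lt_div_iff₀ hN).1 hlt).le
  obtain ⟨S, hSA, hS⟩ := Finset.exists_subset_card_eq hceil
  obtain ⟨i, hi, j, hj, hij, hdist⟩ := hk T hT S hS
  exact (hA (hSA hi) (hSA hj) hij).not_ge hdist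

lemma one_sub_inv_le_treeKStar_one (hN : 0 < N) : 1 - 1 / (N : ℝ) ≤ treeKStar N 1 := by
  set c : Fin N := ⟨0, hN⟩
  have hfar : ((Finset.univ.erase c : Finset (Fin N)) : Set (Fin N)).Pairwise
      fun i j => 1 < (starGraph c).dist i j := by
    intro i hi j hj hij
    simp only [Finset.coe_erase, Finset.coe_univ, Set.mem_sdiff, Set.mem_univ,
      Set.mem_singleton_iff, true_and] at hi hj
    exact (connected_starGraph c).one_lt_dist_of_ne_of_not_adj hij (by simp [hi, hj])
  calc 1 - 1 / (N : ℝ) = ((Finset.univ.erase c).card : ℝ) / N := by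
        rw [Finset.card_erase_of_mem (Finset.mem_univ c), Finset.card_univ, Fintype.card_fin,
          Nat.cast_sub hN, Nat.cast_one, sub_div, div_self (by positivity)]
    _ ≤ treeKStar N 1 := div_le_treeKStar (isTree_starGraph c) hfar

lemma treeKStar_one_le (hN : 2 ≤ N) : treeKStar N 1 ≤ 1 := by
  have : Nontrivial (Fin N) := Fin.nontrivial_iff_two_le.2 hN
  refine treeKStar_le zero_le_one fun T hT S hS => ?_
  obtain ⟨w, hw⟩ := hT.connected.preconnected.exists_adj_of_nontrivial (⟨0, by omega⟩ : Fin N)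
  obtain ⟨x, hx⟩ : ∃ x, x ∉ S := by
    by_contra! hall
    exact (hS (hall _) (hall w) hw.ne).not_ge (dist_le (.cons hw .nil))
  have hlt := Finset.card_lt_univ_of_notMem hx
  rw [Fintype.card_fin] at hlt
  rw [one_mul]
  exact_mod_cast hlt

lemma treeKStar_three_le (hN : 2 ≤ N) : treeKStar N 3 ≤ 1 / 2 + 1 / (N : ℝ) := by
  have : Nontrivial (Fin N) := Fin.nontrivial_iff_two_le.2 hN
  have hN' : (0 : ℝ) < N := by positivity
  refine treeKStar_le (by positivity) fun T hT S hS => ?_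
  have hcard := two_mul_card_le_of_pairwise_two_lt_dist
    hT.connected.preconnected.exists_adj_of_nontrivial (hS.mono' fun _ _ h => by omega)
  rw [Fintype.card_fin] at hcard
  have hcard' : (2 : ℝ) * S.card ≤ N := by exact_mod_cast hcard
  calc (S.card : ℝ) ≤ N / 2 := by linarith
    _ < (1 / 2 + 1 / (N : ℝ)) * N := by rw [add_mul, one_div_mul_cancel hN'.ne']; linarith

/-- With `q = (N - 1) / 2`, each `v ∈ (q, 2q]` hangs below `v - q` and every other vertex below
`0`: a spider with `q` legs of length two whose feet are `spiderLeaves N`. -/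
def spiderParent (N : ℕ) (v : Fin N) : Fin N :=
  if (N - 1) / 2 < v.val ∧ v.val ≤ 2 * ((N - 1) / 2) then ⟨v - (N - 1) / 2, by omega⟩
  else ⟨0, v.pos⟩

lemma spiderParent_lt (hN : 0 < N) : ∀ v ≠ (⟨0, hN⟩ : Fin N), spiderParent N v < v := by
  intro v hv
  have hv : v.val ≠ 0 := fun h => hv (Fin.ext h)
  unfold spiderParent
  split_ifs <;> rw [Fin.lt_def] <;> dsimp only <;> omega

def spiderLeaves (N : ℕ) : Finset (Fin N) :=
  (Finset.Ioc ((N - 1) / 2) (2 * ((N - 1) / 2))).attachFin fun m hm => by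
    rw [Finset.mem_Ioc] at hm; omega

lemma mem_spiderLeaves {v : Fin N} :
    v ∈ spiderLeaves N ↔ (N - 1) / 2 < v.val ∧ v.val ≤ 2 * ((N - 1) / 2) := by
  rw [spiderLeaves, Finset.mem_attachFin, Finset.mem_Ioc]

lemma card_spiderLeaves : (spiderLeaves N).card = (N - 1) / 2 := by
  rw [spiderLeaves, Finset.card_attachFin, Nat.card_Ioc]; omega

lemma lt_dist_spiderLeaves (hN : 0 < N) {i j : Fin N} (hi : i ∈ spiderLeaves N)
    (hj : j ∈ spiderLeaves N) (hij : i ≠ j) :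
    3 < (parentGraph ⟨0, hN⟩ (spiderParent N)).dist i j := by
  rw [mem_spiderLeaves] at hi hj
  have hij : i.val ≠ j.val := fun h => hij (Fin.ext h)
  let F : Fin N → ℤ := fun v =>
    if v.val = i.val then 0 else if v.val = i.val - (N - 1) / 2 then 1
    else if v.val = j.val - (N - 1) / 2 then 3 else if v.val = j.val then 4 else 2
  have hstep : ∀ a ≠ (⟨0, hN⟩ : Fin N), |F a - F (spiderParent N a)| ≤ 1 := by
    intro a ha
    have ha : a.val ≠ 0 := fun h => ha (Fin.ext h)
    unfold spiderParent
    rw [abs_sub_le_iff]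
    split_ifs <;> simp only [F] <;> constructor <;> split_ifs <;> omega
  have hF : ∀ a b, (parentGraph ⟨0, hN⟩ (spiderParent N)).Adj a b → |F a - F b| ≤ 1 := by
    rintro a b ⟨-, ⟨ha, rfl⟩ | ⟨hb, rfl⟩⟩
    · exact hstep a ha
    · rw [abs_sub_comm]; exact hstep b hb
  have hdist := ((isTree_parentGraph (spiderParent_lt hN)).connected i j).abs_sub_le_dist F hF
  have hFi : F i = 0 := if_pos rfl
  have hFj : F j = 4 := by simp only [F]; split_ifs <;> omega
  rw [hFi, hFj] at hdist
  norm_num at hdist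
  exact_mod_cast hdist

lemma half_sub_inv_le_treeKStar_three (hN : 0 < N) : 1 / 2 - 1 / (N : ℝ) ≤ treeKStar N 3 := by
  have hN' : (0 : ℝ) < N := by positivity
  have hcard : (N : ℝ) - 2 ≤ 2 * (spiderLeaves N).card := by
    rw [card_spiderLeaves]
    have : N ≤ 2 * ((N - 1) / 2) + 2 := by omega
    linarith [(by exact_mod_cast this : (N : ℝ) ≤ 2 * ((N - 1) / 2 : ℕ) + 2)]
  calc 1 / 2 - 1 / (N : ℝ) = ((N : ℝ) - 2) / 2 / N := by field_simp
    _ ≤ (spiderLeaves N).card / N := by gcongr; linarith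
    _ ≤ treeKStar N 3 :=
      div_le_treeKStar (isTree_parentGraph (spiderParent_lt hN)) fun i hi j hj hij =>
        lt_dist_spiderLeaves hN hi hj hij

end TreeKStar

lemma tendsto_of_sub_inv_le_of_le_add_inv {f : ℕ → ℝ} {c : ℝ}
    (h : ∀ᶠ N : ℕ in atTop, c - 1 / (N : ℝ) ≤ f N ∧ f N ≤ c + 1 / (N : ℝ)) :
    Tendsto f atTop (nhds c) := by
  have hinv := tendsto_one_div_atTop_nhds_zero_nat (𝕜 := ℝ)
  refine tendsto_of_tendsto_of_tendsto_of_le_of_le' ?_ ?_ (h.mono fun _ h => h.1)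
    (h.mono fun _ h => h.2)
  · simpa using tendsto_const_nhds.sub hinv
  · simpa using tendsto_const_nhds.add hinv

/-- For pooling on trees with edge receptive field `r = 1` the minimal sampling
ratio ensuring an edge in the pooled graph tends to `1` as `N → ∞`; for `r = 3`
it tends to `1/2`. -/
theorem tree_kstar_limits :
    Tendsto (fun N : ℕ => treeKStar N 1) atTop (nhds 1) ∧
    Tendsto (fun N : ℕ => treeKStar N 3) atTop (nhds (1 / 2)) := by
  constructor <;> refine tendsto_of_sub_inv_le_of_le_add_inv ?_ <;>
    filter_upwards [eventually_ge_atTop 2] with N hN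
  · exact ⟨one_sub_inv_le_treeKStar_one (by omega),
      (treeKStar_one_le hN).trans (le_add_of_nonneg_right (by positivity))⟩
  · exact ⟨half_sub_inv_le_treeKStar_three (by omega), treeKStar_three_le hN⟩
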